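/- arXiv:1206.0327 — 2 statements merged into one kernel-verified Lean document; each statement's English description precedes it below -/
import Mathlib

section
/- The map ι is a homomorphism of kℬ*-modules: ι(P.B) = ι(P).B for every path P of Q and every B ∈ ℬ*. -/
set_option maxHeartbeats 1000000

/-! # Common definitions: trees, forests, descent algebras -/

/-- Labeled binary trees: leaves carry a natural number (positive in valid forests),
internal nodes carry a label. -/
inductive LTree : Type
  | leaf : ℕ → LTree
  | node : ℕ → LTree → LTree → LTree
  deriving DecidableEq

instance : Inhabited LTree := ⟨LTree.leaf 1⟩

/-- Unlabeled binary trees with natural number leaves. -/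
inductive UTree : Type
  | leaf : ℕ → UTree
  | node : UTree → UTree → UTree
  deriving DecidableEq

instance : Inhabited UTree := ⟨UTree.leaf 1⟩

namespace LTree

/-- The value of a tree: the sum of its leaf entries. -/
def value : LTree → ℕ
  | leaf x => x
  | node _ t1 t2 => t1.value + t2.value

/-- The foliage of a tree: the list of its leaf entries, left to right. -/
def foliage : LTree → List ℕ
  | leaf x => [x]
  | node _ t1 t2 => t1.foliage ++ t2.foliage

/-- The number of internal nodes. -/
def numNodes : LTree → ℕ
  | leaf _ => 0
  | node _ t1 t2 => t1.numNodes + t2.numNodes + 1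

/-- The list of node labels (in preorder). -/
def labels : LTree → List ℕ
  | leaf _ => []
  | node i t1 t2 => i :: (t1.labels ++ t2.labels)

/-- Labels strictly increase downwards, starting above `p`. -/
def incrFrom : ℕ → LTree → Prop
  | _, leaf _ => True
  | p, node i t1 t2 => p < i ∧ incrFrom i t1 ∧ incrFrom i t2

/-- Shift all node labels up by `m`. -/
def shift (m : ℕ) : LTree → LTree
  | leaf x => leaf x
  | node i t1 t2 => node (i + m) (t1.shift m) (t2.shift m)

/-- Decrease all node labels by one. -/
def dec : LTree → LTree
  | leaf x => leaf x
  | node i t1 t2 => node (i - 1) t1.dec t2.dec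

/-- A tree is aligned if at every node the value of the left subtree is
strictly smaller than the value of the right subtree. -/
def Aligned : LTree → Prop
  | leaf _ => True
  | node _ t1 t2 => t1.value < t2.value ∧ t1.Aligned ∧ t2.Aligned

/-- Replace the leaves of a tree (left to right) by the trees from the supplied list;
returns the new tree together with the unused trees. -/
def graft : LTree → List LTree → LTree × List LTree
  | leaf x, [] => (leaf x, [])
  | leaf _, t :: ts => (t, ts)
  | node i t1 t2, ts =>
    let p1 := t1.graft ts
    let p2 := t2.graft p1.2
    (node i p1.1 p2.1, p2.2)

/-- Find the node with label `i` and return the values of its two subtrees. -/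
def findLab (i : ℕ) : LTree → Option (ℕ × ℕ)
  | leaf _ => none
  | node j t1 t2 =>
    if j = i then some (t1.value, t2.value)
    else (t1.findLab i).orElse (fun _ => t2.findLab i)

/-- The label at the root, if the tree is a node. -/
def rootLabel? : LTree → Option ℕ
  | leaf _ => none
  | node i _ _ => some i

/-- The subtree at a position (list of booleans; `false` = left, `true` = right). -/
def subtreeAt : LTree → List Bool → Option LTree
  | t, [] => some t
  | leaf _, _ :: _ => none
  | node _ t1 t2, b :: p => (if b then t2 else t1).subtreeAt p

/-- Replace the subtree at a position. -/
def replaceAt : LTree → List Bool → LTree → LTree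
  | _, [], u => u
  | leaf x, _ :: _, _ => leaf x
  | node i t1 t2, b :: p, u =>
    if b then node i t1 (t2.replaceAt p u) else node i (t1.replaceAt p u) t2

end LTree

namespace UTree

/-- The value of an unlabeled tree. -/
def value : UTree → ℕ
  | leaf x => x
  | node t1 t2 => t1.value + t2.value

/-- The foliage of an unlabeled tree. -/
def foliage : UTree → List ℕ
  | leaf x => [x]
  | node t1 t2 => t1.foliage ++ t2.foliage

/-- The number of internal nodes. -/
def numNodes : UTree → ℕ
  | leaf _ => 0
  | node t1 t2 => t1.numNodes + t2.numNodes + 1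

/-- All leaf entries are positive. -/
def leavesPos : UTree → Prop
  | leaf x => 0 < x
  | node t1 t2 => t1.leavesPos ∧ t2.leavesPos

/-- An unlabeled tree is aligned if at every node the left value is smaller
than the right value. -/
def Aligned : UTree → Prop
  | leaf _ => True
  | node t1 t2 => t1.value < t2.value ∧ t1.Aligned ∧ t2.Aligned

/-- No node has two leaf children bearing the same value. -/
def NoTwin : UTree → Prop
  | leaf _ => True
  | node t1 t2 => t1.NoTwin ∧ t2.NoTwin ∧ ¬ ∃ a, t1 = leaf a ∧ t2 = leaf a

/-- Graft: replace leaves (left to right) by trees from the supplied list. -/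
def graft : UTree → List UTree → UTree × List UTree
  | leaf x, [] => (leaf x, [])
  | leaf _, t :: ts => (t, ts)
  | node t1 t2, ts =>
    let p1 := t1.graft ts
    let p2 := t2.graft p1.2
    (node p1.1 p2.1, p2.2)

/-- The total order on unlabeled trees: compare values, then (reversed) number of
nodes, then recursively the left and right subtrees. -/
def ltt : UTree → UTree → Prop
  | leaf a, leaf b => a < b
  | leaf a, node y1 y2 => a < (node y1 y2).value
  | node x1 x2, leaf b => (node x1 x2).value ≤ b
  | node x1 x2, node y1 y2 =>
      (node x1 x2).value < (node y1 y2).value ∨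
      ((node x1 x2).value = (node y1 y2).value ∧
        ((node y1 y2).numNodes < (node x1 x2).numNodes ∨
          ((node x1 x2).numNodes = (node y1 y2).numNodes ∧
            (ltt x1 y1 ∨ (x1 = y1 ∧ ltt x2 y2)))))

end UTree

/-- Erase the node labels of a labeled tree. -/
def eraseT : LTree → UTree
  | .leaf x => .leaf x
  | .node _ t1 t2 => .node (eraseT t1) (eraseT t2)

/-! ## Labeled forests -/

/-- The squash of a forest: the list of values of its trees. -/
def squash (X : List LTree) : List ℕ := X.map LTree.value

/-- The foliage of a forest. -/
def forestFoliage (X : List LTree) : List ℕ := X.flatMap LTree.foliage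

/-- The length of a forest: its total number of nodes. -/
def forestLen (X : List LTree) : ℕ := (X.map LTree.numNodes).sum

/-- The value of a forest: the sum of the values of its trees. -/
def forestValue (X : List LTree) : ℕ := (X.map LTree.value).sum

/-- All node labels of a forest. -/
def forestLabels (X : List LTree) : List ℕ := X.flatMap LTree.labels

/-- A list of labeled trees is a labeled forest if every node's label exceeds that
of its parent, the labels used are exactly `1, 2, …, l` where `l` is the number
of nodes, and all leaves are positive. -/
def IsLForest (X : List LTree) : Prop :=
  (∀ t ∈ X, t.incrFrom 0) ∧
  (forestLabels X).Perm (List.range' 1 (forestLen X)) ∧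
  ∀ x ∈ forestFoliage X, 0 < x

/-- A forest is aligned if all its trees are. -/
def ForestAligned (X : List LTree) : Prop := ∀ t ∈ X, t.Aligned

/-- Replace the leaves of the forest `X` (left to right) by the trees of `ys`. -/
def graftForest : List LTree → List LTree → List LTree
  | [], _ => []
  | t :: ts, ys =>
    let p := t.graft ys
    p.1 :: graftForest ts p.2

/-- The product `X • Y` of labeled forests: replace the `i`-th leaf of `X` by the
`i`-th tree of `Y`, after shifting all node labels of `Y` up by `ℓ(X)`.
(Meaningful when the foliage of `X` equals the squash of `Y`.) -/
def bullet (X Y : List LTree) : List LTree :=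
  graftForest X (Y.map (LTree.shift (forestLen X)))

/-- The forest of leaves determined by a composition. -/
def leavesOf (c : List ℕ) : List LTree := c.map LTree.leaf

/-- Iterated product `X₁ • (X₂ • (⋯ • Xₗ))` of a list of forests. -/
def chainProd : List (List LTree) → List LTree
  | [] => []
  | [A] => A
  | A :: F => bullet A (chainProd F)

/-- Find the node with label `i` in a forest; return the values of its subtrees. -/
def forestFindLab (i : ℕ) : List LTree → Option (ℕ × ℕ)
  | [] => none
  | t :: r => (t.findLab i).orElse (fun _ => forestFindLab i r)

/-! ## Unlabeled forests -/

def squashU (X : List UTree) : List ℕ := X.map UTree.value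
def foliageU (X : List UTree) : List ℕ := X.flatMap UTree.foliage
def forestLenU (X : List UTree) : ℕ := (X.map UTree.numNodes).sum
def forestValueU (X : List UTree) : ℕ := (X.map UTree.value).sum

/-- An unlabeled forest is valid when all its leaves are positive. -/
def IsUForest (X : List UTree) : Prop := ∀ x ∈ foliageU X, 0 < x

def ForestAlignedU (X : List UTree) : Prop := ∀ t ∈ X, t.Aligned

def graftForestU : List UTree → List UTree → List UTree
  | [], _ => []
  | t :: ts, ys =>
    let p := t.graft ys
    p.1 :: graftForestU ts p.2

/-- The product of unlabeled forests (no label adjustment needed). -/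
def bulletU (X Y : List UTree) : List UTree := graftForestU X Y

/-- Erase all node labels of a labeled forest. -/
def eraseF (X : List LTree) : List UTree := X.map eraseT
/-! ## The difference operator δ and the map Δ -/

/-- Locate the part of the forest whose root is the node labeled `1`; return its
(0-based) index together with the forest obtained by splitting that part into its
two subtrees. -/
def splitAt1 : List LTree → Option (ℕ × List LTree)
  | [] => none
  | LTree.node i t1 t2 :: rest =>
      if i = 1 then some (0, t1 :: t2 :: rest)
      else (splitAt1 rest).map (fun p => (p.1 + 1, LTree.node i t1 t2 :: p.2))
  | LTree.leaf x :: rest => (splitAt1 rest).map (fun p => (p.1 + 1, LTree.leaf x :: p.2))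

/-- Swap the entries in positions `i` and `i+1` (0-based) of a list. -/
def swapAdj {α : Type} : ℕ → List α → List α
  | 0, a :: b :: r => b :: a :: r
  | n + 1, a :: r => a :: swapAdj n r
  | _, l => l

/-- The difference operator `δ` on the span of labeled forests: if `ℓ(X) = 0` then
`δ(X) = X`; otherwise, if the node labeled 1 is the root of the `i`-th part with
subtrees `X₁, X₂`, then `δ(X) = Y − Y.(i,i+1)` where `Y` is obtained by replacing
the `i`-th part by the parts `X₁ X₂` and decreasing all labels by one. -/
noncomputable def deltaF (k : Type) [Ring k] (X : List LTree) : (List LTree) →₀ k :=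
  match splitAt1 X with
  | none => Finsupp.single X 1
  | some (i, Y) =>
      Finsupp.single (Y.map LTree.dec) 1 - Finsupp.single (swapAdj i (Y.map LTree.dec)) 1

/-- The linear extension of `δ`. -/
noncomputable def deltaLin (k : Type) [Ring k] :
    ((List LTree) →₀ k) →ₗ[k] ((List LTree) →₀ k) :=
  (Finsupp.lift ((List LTree) →₀ k) k (List LTree)) (deltaF k)

/-- `Δ(X) = δ^{ℓ(X)}(X)`, recorded as an element of the free associative algebra
with basis the compositions (identifying a forest of length 0 with its foliage). -/
noncomputable def DeltaComp (k : Type) [Ring k] (X : List LTree) : (List ℕ) →₀ k :=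
  Finsupp.mapDomain forestFoliage
    ((fun v => deltaLin k v)^[forestLen X] (Finsupp.single X 1))

/-- The linear map `Δ : kL → kℕ*`. -/
noncomputable def DeltaMap (k : Type) [Ring k] : ((List LTree) →₀ k) →ₗ[k] ((List ℕ) →₀ k) :=
  (Finsupp.lift ((List ℕ) →₀ k) k (List LTree)) (DeltaComp k)

/-! ## Pólya orbit sums and products on the spans -/

/-- The Pólya orbit sum `[X]` of a labeled forest: the sum of all distinct
rearrangements of its parts. -/
noncomputable def pol (k : Type) [Semiring k] (X : List LTree) : (List LTree) →₀ k :=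
  ∑ Y ∈ X.permutations.toFinset, Finsupp.single Y 1

/-- The Pólya orbit sum of an unlabeled forest. -/
noncomputable def polU (k : Type) [Semiring k] (X : List UTree) : (List UTree) →₀ k :=
  ∑ Y ∈ X.permutations.toFinset, Finsupp.single Y 1

/-- The bilinear product on `kL`: `X • Y` when foliage of `X` equals squash of `Y`,
and `0` otherwise. -/
noncomputable def mulL (k : Type) [Semiring k] (f g : (List LTree) →₀ k) : (List LTree) →₀ k :=
  f.sum fun X a => g.sum fun Y b =>
    if forestFoliage X = squash Y then Finsupp.single (bullet X Y) (a * b) else 0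

/-- The bilinear product on `kM` (unlabeled forests). -/
noncomputable def mulM (k : Type) [Semiring k] (f g : (List UTree) →₀ k) : (List UTree) →₀ k :=
  f.sum fun X a => g.sum fun Y b =>
    if foliageU X = squashU Y then Finsupp.single (bulletU X Y) (a * b) else 0

/-- The concatenation product on `kM`. -/
noncomputable def mulCat (k : Type) [Semiring k] (f g : (List UTree) →₀ k) : (List UTree) →₀ k :=
  f.sum fun X a => g.sum fun Y b => Finsupp.single (X ++ Y) (a * b)

/-- The product on the free associative algebra `kℕ*` (concatenation of compositions). -/
noncomputable def mulComp (k : Type) [Semiring k] (f g : (List ℕ) →₀ k) : (List ℕ) →₀ k :=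
  f.sum fun u a => g.sum fun v b => Finsupp.single (u ++ v) (a * b)

/-- The linear map `E : kL → kM` erasing node labels. -/
noncomputable def EL (k : Type) [Semiring k] : ((List LTree) →₀ k) →ₗ[k] ((List UTree) →₀ k) :=
  Finsupp.lmapDomain k k eraseF

/-- `π` on a single unlabeled tree: replace every node by the Lie bracket. -/
noncomputable def piT (k : Type) [Ring k] : UTree → (List ℕ) →₀ k
  | .leaf x => Finsupp.single [x] 1
  | .node t1 t2 => mulComp k (piT k t1) (piT k t2) - mulComp k (piT k t2) (piT k t1)

/-- `π` on an unlabeled forest: the concatenation product of the images of its parts. -/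
noncomputable def piF (k : Type) [Ring k] (X : List UTree) : (List ℕ) →₀ k :=
  (X.map (piT k)).foldr (mulComp k) (Finsupp.single [] 1)

/-- The Pólya action of a permutation of `Fin j` on a list: the entry in position
`i` of the result is the entry in position `σ⁻¹ i` of the input. -/
def permuteL {α : Type} [Inhabited α] {j : ℕ} (σ : Equiv.Perm (Fin j)) (X : List α) :
    List α :=
  List.ofFn fun i => X.getD ((σ⁻¹ i : Fin j) : ℕ) default
/-! ## The quiver Q, its paths, and the map ι -/

/-- The partition obtained by splitting one part `a+b` into parts `a` and `b`. -/
def applyStep (a b : ℕ) (p : Multiset ℕ) : Multiset ℕ := a ::ₘ b ::ₘ p.erase (a + b)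

/-- The vertex reached from `p` after performing the given splitting steps. -/
def sourceAfter (p : Multiset ℕ) (steps : List (ℕ × ℕ)) : Multiset ℕ :=
  steps.foldl (fun q s => applyStep s.1 s.2 q) p

/-- A path in the quiver `Q`, recorded by its destination vertex (a partition,
i.e. a multiset of parts) together with the list of branch symbols `[aᵢ|bᵢ]`
read from the destination towards the source. -/
structure QPath where
  dest : Multiset ℕ
  steps : List (ℕ × ℕ)
  deriving DecidableEq

/-- Each step is applicable in turn. -/
def SeqOK : Multiset ℕ → List (ℕ × ℕ) → Prop
  | _, [] => True
  | p, s :: rest => s.1 + s.2 ∈ p ∧ SeqOK (applyStep s.1 s.2 p) rest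

/-- A valid path of `Q`: positive parts, each step `[a|b]` has `0 < a < b`, and the
steps apply in sequence. -/
def QPath.Valid (P : QPath) : Prop :=
  (∀ x ∈ P.dest, 0 < x) ∧ (∀ s ∈ P.steps, 0 < s.1 ∧ s.1 < s.2) ∧ SeqOK P.dest P.steps

/-- The source vertex of a path. -/
def QPath.source (P : QPath) : Multiset ℕ := sourceAfter P.dest P.steps

/-- The canonical length-one forest attached to the edge with destination `q`
splitting a part `a + b` into `a` and `b`. -/
noncomputable def edgeForest (a b : ℕ) (q : Multiset ℕ) : List LTree :=
  LTree.node 1 (LTree.leaf a) (LTree.leaf b) :: leavesOf (q.erase (a + b)).toList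

/-- `ι` on the path with destination `p` and branch symbols `steps`:
the product (in `kℒ`) of the orbit sums of the edge forests, with the edge nearest
the destination leftmost, times the orbit sum of the source vertex. -/
noncomputable def iotaSteps (k : Type) [Semiring k] :
    Multiset ℕ → List (ℕ × ℕ) → ((List LTree) →₀ k)
  | p, [] => pol k (leavesOf p.toList)
  | p, s :: rest =>
      mulL k (pol k (edgeForest s.1 s.2 p)) (iotaSteps k (applyStep s.1 s.2 p) rest)

/-- `ι` of a single path. -/
noncomputable def iotaP (k : Type) [Semiring k] (P : QPath) : (List LTree) →₀ k :=
  iotaSteps k P.dest P.steps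

/-- The linear extension `ι : kQ → kℒ`. -/
noncomputable def iotaLinM (k : Type) [Semiring k] : (QPath →₀ k) →ₗ[k] ((List LTree) →₀ k) :=
  (Finsupp.lift ((List LTree) →₀ k) k QPath) (iotaP k)

/-! ## The branch monoid and its actions -/

/-- All ways to replace one leaf of value `a+b` in a tree by a node labeled `lab`
with leaves `a` and `b`. -/
def branchActTree (a b lab : ℕ) : LTree → List LTree
  | .leaf x =>
      if x = a + b then [LTree.node lab (LTree.leaf a) (LTree.leaf b)] else []
  | .node i t1 t2 =>
      (branchActTree a b lab t1).map (fun u => LTree.node i u t2) ++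
      (branchActTree a b lab t2).map (fun u => LTree.node i t1 u)

/-- All ways to replace one leaf of value `a+b` in a forest by a node labeled `lab`. -/
def branchWays (a b lab : ℕ) : List LTree → List (List LTree)
  | [] => []
  | t :: rest =>
      (branchActTree a b lab t).map (· :: rest) ++
      (branchWays a b lab rest).map (t :: ·)

/-- The action of the branch symbol `[a|b]` on `kL`. -/
noncomputable def actL1 (k : Type) [Semiring k] (s : ℕ × ℕ) (x : (List LTree) →₀ k) :
    (List LTree) →₀ k :=
  x.sum fun X a =>
    a • ((branchWays s.1 s.2 (forestLen X + 1) X).map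
      (fun Y => Finsupp.single Y (1 : k))).sum

/-- The action of a word of the branch monoid `ℬ*` on `kL`. -/
noncomputable def actLW (k : Type) [Semiring k] (w : List (ℕ × ℕ)) (x : (List LTree) →₀ k) :
    (List LTree) →₀ k :=
  w.foldl (fun y s => actL1 k s y) x

/-- The action of the branch symbol `[a|b]` on `kQ`: prepend an edge at the source
if the source has a part `a + b`, and `0` otherwise. -/
noncomputable def actQ1 (k : Type) [Semiring k] (s : ℕ × ℕ) (x : QPath →₀ k) : QPath →₀ k :=
  x.sum fun P a =>
    if s.1 + s.2 ∈ P.source then Finsupp.single ⟨P.dest, P.steps ++ [s]⟩ a else 0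

/-- The action of a word of `ℬ*` on `kQ`. -/
noncomputable def actQW (k : Type) [Semiring k] (w : List (ℕ × ℕ)) (x : QPath →₀ k) :
    QPath →₀ k :=
  w.foldl (fun y s => actQ1 k s y) x

/-- The path `𝔭(X)` associated to an (aligned) labeled forest `X`: the destination is
the partition of the squash of `X`, and the `i`-th branch symbol records the values of
the two subtrees of the node labeled `i`. -/
noncomputable def pPath (X : List LTree) : QPath :=
  ⟨(squash X : Multiset ℕ),
    (List.range (forestLen X)).map fun i => (forestFindLab (i + 1) X).getD (0, 0)⟩
/-! ## The equivalence ∼ on labeled forests -/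

/-- The subtree of a forest at a position (part index, path in the part). -/
def forestSubtreeAt (X : List LTree) (q : ℕ × List Bool) : Option LTree :=
  if h : q.1 < X.length then (X.get ⟨q.1, h⟩).subtreeAt q.2 else none

/-- Replace the subtree at a position of a forest. -/
def forestReplaceAt (X : List LTree) (q : ℕ × List Bool) (u : LTree) : List LTree :=
  X.set q.1 ((X.getD q.1 default).replaceAt q.2 u)

/-- The label of the parent node of the position `q`, if it exists. -/
def parentLabel (X : List LTree) (q : ℕ × List Bool) : Option ℕ :=
  if q.2 = [] then none
  else (forestSubtreeAt X (q.1, q.2.dropLast)).bind LTree.rootLabel?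

/-- Two positions address disjoint subtrees. -/
def PosDisjoint (q r : ℕ × List Bool) : Prop :=
  q.1 ≠ r.1 ∨ (q.1 = r.1 ∧ ¬ q.2 <+: r.2 ∧ ¬ r.2 <+: q.2)

/-- Move (1): exchange two disjoint non-leaf subtrees `U`, `V` of equal value such that
the labels of the parents of `U` and `V` (where these exist) are smaller than the root
labels of `U` and `V`. -/
def Move1 (X Y : List LTree) : Prop :=
  ∃ (q r : ℕ × List Bool) (U V : LTree),
    PosDisjoint q r ∧
    forestSubtreeAt X q = some U ∧ forestSubtreeAt X r = some V ∧
    U.rootLabel?.isSome ∧ V.rootLabel?.isSome ∧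
    U.value = V.value ∧
    (∀ m, (parentLabel X q = some m ∨ parentLabel X r = some m) →
      ∀ j, (U.rootLabel? = some j ∨ V.rootLabel? = some j) → m < j) ∧
    Y = forestReplaceAt (forestReplaceAt X q V) r U

/-- Exchange the entries in positions `i` and `j` of a list. -/
def swapEntries (X : List LTree) (i j : ℕ) : List LTree :=
  (X.set i (X.getD j default)).set j (X.getD i default)

/-- Move (2): exchange two parts of a forest. -/
def Move2 (X Y : List LTree) : Prop :=
  ∃ i j, i < j ∧ j < X.length ∧ Y = swapEntries X i j

/-- The equivalence relation `∼` generated by the two kinds of moves. -/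
def SimRel : List LTree → List LTree → Prop :=
  Relation.ReflTransGen (fun A B => Move1 A B ∨ Move2 A B)

/-! ## The labeling map F -/

/-- Preorder labeling of an unlabeled tree, starting after label `s`; returns the
labeled tree and the last label used. -/
def labelTreeAux : ℕ → UTree → LTree × ℕ
  | s, .leaf x => (LTree.leaf x, s)
  | s, .node t1 t2 =>
    let p1 := labelTreeAux (s + 1) t1
    let p2 := labelTreeAux p1.2 t2
    (LTree.node (s + 1) p1.1 p2.1, p2.2)

def labelFAux : ℕ → List UTree → List LTree
  | _, [] => []
  | s, t :: r =>
    let p := labelTreeAux s t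
    p.1 :: labelFAux p.2 r

/-- The labeled forest `F(X)`: label the nodes of each part in prefix (preorder)
order, the nodes of each part receiving smaller labels than those of later parts. -/
def labelF (X : List UTree) : List LTree := labelFAux 0 X

/-! ## Compositions from subsets, and alleys -/

/-- The composition of `n` attached to a subset `J ⊆ {1, …, n−1}`: the list of
successive differences of `{0, n} ∪ (S ∖ J)`. -/
def phi (n : ℕ) (J : Finset ℕ) : List ℕ :=
  let ts := ((Finset.Icc 1 (n - 1)) \ J).sort (· ≤ ·)
  List.zipWith (fun a b => b - a) (0 :: ts) (ts ++ [n])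

/-- The start of the maximal block of consecutive points containing `i` linked by
the transpositions in `J` (the transposition `s` links `s` and `s+1`). -/
def bStart (J : Finset ℕ) : ℕ → ℕ
  | 0 => 0
  | 1 => 1
  | i + 2 => if (i + 1) ∈ J then bStart J (i + 1) else i + 2

/-- The end of the maximal block of consecutive points of `{1, …, n}` containing `i`
linked by the transpositions in `J`. -/
def bEnd (J : Finset ℕ) (n : ℕ) (i : ℕ) : ℕ :=
  if h : i < n ∧ i ∈ J then bEnd J n (i + 1) else i
termination_by n - i
decreasing_by
  have := h.1
  omega

/-- The longest element `w_J` of the parabolic subgroup `W_J ≤ Sₙ`, described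
explicitly as the permutation of `{1, …, n}` reversing each maximal block of
consecutive points linked by the transpositions in `J`. -/
def wJpt (n : ℕ) (J : Finset ℕ) (i : ℕ) : ℕ := bStart J i + bEnd J n i - i

/-- The permutation `ω = w_J ⬝ w_{J ∪ {t}}` (as a right action on points). -/
def omegaPt (n : ℕ) (J : Finset ℕ) (t : ℕ) (i : ℕ) : ℕ :=
  wJpt n (insert t J) (wJpt n J i)

/-- The conjugate `s^ω` of the Coxeter generator `s` by `ω = w_J w_{J∪{t}}`:
the generator whose transposition exchanges the images of `s` and `s+1`. -/
def conjGen (n : ℕ) (J : Finset ℕ) (t : ℕ) (s : ℕ) : ℕ :=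
  min (omegaPt n J t s) (omegaPt n J t (s + 1))

/-- An alley `(J; s₁, …, s_l)`. -/
structure Alley where
  J : Finset ℕ
  s : List ℕ
  deriving DecidableEq

/-- A valid alley for `Sₙ`: `J ⊆ S = {1, …, n−1}` and `s₁, …, s_l` are distinct
elements of `J`. -/
def IsAlley (n : ℕ) (a : Alley) : Prop :=
  a.J ⊆ Finset.Icc 1 (n - 1) ∧ a.s.Nodup ∧ ∀ x ∈ a.s, x ∈ a.J

/-- The action of the Coxeter generator `t` on an alley:
`(J; s₁, …, s_l).t = (J^ω; s₁^ω, …, s_l^ω)` where `ω = w_J w_{J∪{t}}`. -/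
def actAlley (n : ℕ) (t : ℕ) (a : Alley) : Alley :=
  ⟨a.J.image (conjGen n a.J t), a.s.map (conjGen n a.J t)⟩

/-- The action of a word of the free monoid `S*` on alleys. -/
def actWordA (n : ℕ) (a : Alley) (w : List ℕ) : Alley :=
  w.foldl (fun b t => actAlley n t b) a

/-- The defining property of the forest `φ(a)` attached to an alley `a = (J; s₁,…,s_l)`:
it is a labeled forest of length `l` admitting a factorization `X₁ • ⋯ • X_l` into
length-one forests with `s(Xᵢ) = φ(J ∖ {s₁,…,s_{i−1}})` and
`f(Xᵢ) = φ(J ∖ {s₁,…,sᵢ})`; for `l = 0` it is the forest of leaves `φ(J)`. -/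
def AlleySpec (n : ℕ) (a : Alley) (X : List LTree) : Prop :=
  IsLForest X ∧ forestLen X = a.s.length ∧
  ∃ F : List (List LTree), F.length = a.s.length ∧
    (∀ A ∈ F, IsLForest A ∧ forestLen A = 1) ∧
    (∀ (i : ℕ) (h : i < F.length),
      squash (F.get ⟨i, h⟩) = phi n (a.J \ (a.s.take i).toFinset) ∧
      forestFoliage (F.get ⟨i, h⟩) = phi n (a.J \ (a.s.take (i + 1)).toFinset)) ∧
    X = F.foldr bullet (leavesOf (phi n (a.J \ a.s.toFinset)))
/-! ## The descent algebra of the symmetric group -/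

/-- `w ∈ X_J`: every descent of `w` (viewing `w` as a permutation of `{1, …, n}`
via `Fin n`) occurs at a position belonging to `J`. -/
def DescAllowed (n : ℕ) (J : Finset ℕ) (w : Equiv.Perm (Fin n)) : Prop :=
  ∀ i j : Fin n, (i : ℕ) + 1 = (j : ℕ) → w j < w i → ((i : ℕ) + 1) ∈ J

open Classical in
/-- The element `x_J = ∑_{w ∈ X_J} w` of the group algebra of `Sₙ`. -/
noncomputable def xJelt (k : Type) [Semiring k] (n : ℕ) (J : Finset ℕ) :
    MonoidAlgebra k (Equiv.Perm (Fin n)) :=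
  ∑ w : Equiv.Perm (Fin n),
    if DescAllowed n J w then MonoidAlgebra.single w 1 else 0

/-- The descent algebra `Σ(Sₙ)` as a submodule (by Solomon's theorem, a subalgebra)
of the group algebra: the span of the `x_J`, `J ⊆ S`. -/
noncomputable def descentSpan (k : Type) [Semiring k] (n : ℕ) :
    Submodule k (MonoidAlgebra k (Equiv.Perm (Fin n))) :=
  Submodule.span k {x | ∃ J ⊆ Finset.Icc 1 (n - 1), x = xJelt k n J}

/-! ## Spans -/

/-- `kℒₙ`: the span of Pólya orbit sums of labeled forests of value `n`. -/
noncomputable def LspanN (k : Type) [Semiring k] (n : ℕ) :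
    Submodule k ((List LTree) →₀ k) :=
  Submodule.span k {y | ∃ X, IsLForest X ∧ forestValue X = n ∧ y = pol k X}

/-- `kℒ`: the span of Pólya orbit sums of labeled forests. -/
noncomputable def LspanAll (k : Type) [Semiring k] : Submodule k ((List LTree) →₀ k) :=
  Submodule.span k {y | ∃ X, IsLForest X ∧ y = pol k X}

/-- `kℳ`: the span of Pólya orbit sums of unlabeled forests. -/
noncomputable def MspanAll (k : Type) [Semiring k] : Submodule k ((List UTree) →₀ k) :=
  Submodule.span k {y | ∃ X, IsUForest X ∧ y = polU k X}

/-- `kℒ⁺`: the span of Pólya orbit sums of aligned labeled forests. -/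
noncomputable def LplusSpan (k : Type) [Semiring k] : Submodule k ((List LTree) →₀ k) :=
  Submodule.span k {y | ∃ X, IsLForest X ∧ ForestAligned X ∧ y = pol k X}

/-- `kM⁺`: the span of aligned unlabeled forests. -/
noncomputable def MplusSpan (k : Type) [Semiring k] : Submodule k ((List UTree) →₀ k) :=
  Submodule.span k {y | ∃ X, IsUForest X ∧ ForestAlignedU X ∧ y = Finsupp.single X (1 : k)}

/-- The identity element of `kLₙ`: the sum of all compositions of `n`. -/
noncomputable def unitL (k : Type) [Semiring k] (n : ℕ) : (List LTree) →₀ k :=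
  ∑ c : Composition n, Finsupp.single (leavesOf c.blocks) 1

/-- `kQₙ`: the span of the valid paths of the quiver `Qₙ` (partitions of `n`). -/
noncomputable def QspanN (k : Type) [Semiring k] (n : ℕ) : Submodule k (QPath →₀ k) :=
  Submodule.span k
    {y | ∃ P : QPath, P.Valid ∧ P.dest.sum = n ∧ y = Finsupp.single P 1}

/-- The path-algebra product on `kQ`: the concatenation "`P` then `F`" when the
destination of `P` is the source of `F`, and `0` otherwise. -/
noncomputable def mulQ (k : Type) [Semiring k] (f g : QPath →₀ k) : QPath →₀ k :=
  f.sum fun P a => g.sum fun F b =>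
    if F.source = P.dest then Finsupp.single ⟨F.dest, F.steps ++ P.steps⟩ (a * b) else 0

/-! ## The ideals 𝒩 and 𝒥 -/

/-- The generators of the ideal `𝒩`: `(U,V) + (V,U)`. -/
def NGens (k : Type) [Semiring k] : Set ((List UTree) →₀ k) :=
  {g | ∃ U V : UTree, U.leavesPos ∧ V.leavesPos ∧
    g = Finsupp.single [UTree.node U V] 1 + Finsupp.single [UTree.node V U] 1}

/-- The generators of the ideal `𝒥`: the Jacobi sums
`(X,(Y,Z)) + (Y,(Z,X)) + (Z,(X,Y))`. -/
def JGens (k : Type) [Semiring k] : Set ((List UTree) →₀ k) :=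
  {g | ∃ X Y Z : UTree, X.leavesPos ∧ Y.leavesPos ∧ Z.leavesPos ∧
    g = Finsupp.single [UTree.node X (UTree.node Y Z)] 1 +
        Finsupp.single [UTree.node Y (UTree.node Z X)] 1 +
        Finsupp.single [UTree.node Z (UTree.node X Y)] 1}

/-- The two-sided ideal `𝒩 + 𝒥` of `kM` with respect to concatenation. -/
noncomputable def NJideal (k : Type) [Semiring k] : Submodule k ((List UTree) →₀ k) :=
  Submodule.span k {x | ∃ (A B : List UTree) (g : (List UTree) →₀ k),
    (g ∈ NGens k ∨ g ∈ JGens k) ∧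
    x = mulCat k (Finsupp.single A (1 : k)) (mulCat k g (Finsupp.single B 1))}

/-! ## Branch relations -/

/-- The two-term branch relation `[a|b][c|d] − [c|d][a|b]`. -/
noncomputable def Rel1 (k : Type) [Ring k] (a b c d : ℕ) : (List (ℕ × ℕ)) →₀ k :=
  Finsupp.single [(a, b), (c, d)] 1 - Finsupp.single [(c, d), (a, b)] 1

/-- The three-term branch relation
`[a|b][c|d][x|y] + [x|y][a|b][c|d] − [a|b][x|y][c|d] − [c|d][x|y][a|b]`. -/
noncomputable def Rel2 (k : Type) [Ring k] (a b c d x y : ℕ) : (List (ℕ × ℕ)) →₀ k :=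
  Finsupp.single [(a, b), (c, d), (x, y)] 1 + Finsupp.single [(x, y), (a, b), (c, d)] 1
  - Finsupp.single [(a, b), (x, y), (c, d)] 1 - Finsupp.single [(c, d), (x, y), (a, b)] 1

/-- The side condition on `a, b, c, d`: positive, `a < b`, `c < d`,
`a+b ∉ {c,d}` and `c+d ∉ {a,b}`. -/
def Cond1 (a b c d : ℕ) : Prop :=
  0 < a ∧ a < b ∧ 0 < c ∧ c < d ∧ a + b ≠ c ∧ a + b ≠ d ∧ c + d ≠ a ∧ c + d ≠ b

/-- The set `ℛ ⊆ kℬ*` of branch relations. -/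
noncomputable def BranchRels (k : Type) [Ring k] : Set ((List (ℕ × ℕ)) →₀ k) :=
  {r | ∃ a b c d, Cond1 a b c d ∧ r = Rel1 k a b c d} ∪
  {r | ∃ a b c d x y, Cond1 a b c d ∧ 0 < x ∧ x < y ∧
    ((a + b = c + d ∧ (a + b = x ∨ a + b = y)) ∨
      ((x + y = a ∨ x + y = b) ∧ (x + y = c ∨ x + y = d))) ∧
    r = Rel2 k a b c d x y}

/-!
On a product `X • Y` the branch symbol `[a|b]` can only split a leaf of one of the grafted
trees of `Y`, and the new label `ℓ(X • Y) + 1` is the label `ℓ(Y) + 1` it receives in `Y.[a|b]`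
shifted by `ℓ(X)`. Hence `(x • y).[a|b] = x • (y.[a|b])`, and on
`ι(P) = [X_{e_m}] • ⋯ • [X_{e_1}] • [p]` the action only touches the orbit sum of the source `p`.
Splitting a leaf `a + b` in the arrangements of `p` produces every arrangement of the forest
`X_e` of the edge `e` into `p` exactly once (the arrangement of `p` is recovered as the squash),
so `[p].[a|b] = [X_e] = [X_e] • [source of e]`; substituted for `[p]` this gives `ι(P.[a|b])`.
When `p` has no part `a + b` both sides vanish.
-/

theorem List.exists_append_of_length_eq_add {α : Type*} {l : List α} {m n : ℕ}
    (h : l.length = m + n) : ∃ u v, l = u ++ v ∧ u.length = m ∧ v.length = n :=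
  ⟨l.take m, l.drop m, (l.take_append_drop m).symm, by simp; omega, by simp; omega⟩

section Leaves

@[simp]
theorem leavesOf_nil : leavesOf [] = [] := rfl

@[simp]
theorem leavesOf_cons (x : ℕ) (u : List ℕ) : leavesOf (x :: u) = .leaf x :: leavesOf u := rfl

@[simp]
theorem leavesOf_append (u v : List ℕ) : leavesOf (u ++ v) = leavesOf u ++ leavesOf v :=
  List.map_append

@[simp]
theorem length_leavesOf (u : List ℕ) : (leavesOf u).length = u.length := List.length_map _

@[simp]
theorem squash_leavesOf (w : List ℕ) : squash (leavesOf w) = w := by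
  simp [squash, leavesOf, Function.comp_def, LTree.value]

theorem leavesOf_squash {Z : List LTree} (h : ∀ t ∈ Z, ∃ x, t = .leaf x) :
    leavesOf (squash Z) = Z := by
  conv_rhs => rw [← List.map_id Z]
  simp only [leavesOf, squash, List.map_map]
  refine List.map_congr_left fun t ht => ?_
  obtain ⟨x, rfl⟩ := h t ht
  rfl

theorem forestFoliage_cons (t : LTree) (X : List LTree) :
    forestFoliage (t :: X) = t.foliage ++ forestFoliage X := List.flatMap_cons

theorem forestFoliage_leavesOf (w : List ℕ) : forestFoliage (leavesOf w) = w := by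
  induction w with
  | nil => rfl
  | cons x w ih => simp [forestFoliage_cons, LTree.foliage, ih]

theorem forestLen_cons (t : LTree) (X : List LTree) :
    forestLen (t :: X) = t.numNodes + forestLen X := List.sum_cons

theorem forestLen_append (X Y : List LTree) :
    forestLen (X ++ Y) = forestLen X + forestLen Y := by
  simp [forestLen]

theorem forestLen_leavesOf (w : List ℕ) : forestLen (leavesOf w) = 0 := by
  simp [forestLen, leavesOf, Function.comp_def, LTree.numNodes]

end Leaves

namespace LTree

theorem graft_append {t : LTree} {u : List LTree} (h : t.foliage.length = u.length)
    (v : List LTree) : t.graft (u ++ v) = ((t.graft u).1, v) := by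
  induction t generalizing u v with
  | leaf x =>
    obtain ⟨y, rfl⟩ := List.length_eq_one_iff.mp h.symm
    rfl
  | node i t1 t2 ih1 ih2 =>
    obtain ⟨u1, u2, rfl, h1, h2⟩ :=
      List.exists_append_of_length_eq_add (by simpa [foliage] using h.symm)
    simp [graft, ih1 h1.symm, ih2 h2.symm]

theorem graft_leavesOf_foliage (t : LTree) : (t.graft (leavesOf t.foliage)).1 = t := by
  induction t with
  | leaf x => rfl
  | node i t1 t2 ih1 ih2 => simp [graft, foliage, graft_append, ih1, ih2]

theorem numNodes_graft {t : LTree} {u : List LTree} (h : t.foliage.length = u.length) :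
    (t.graft u).1.numNodes = t.numNodes + forestLen u := by
  induction t generalizing u with
  | leaf x =>
    obtain ⟨y, rfl⟩ := List.length_eq_one_iff.mp h.symm
    simp [graft, numNodes, forestLen]
  | node i t1 t2 ih1 ih2 =>
    obtain ⟨u1, u2, rfl, h1, h2⟩ :=
      List.exists_append_of_length_eq_add (by simpa [foliage] using h.symm)
    simp [graft, numNodes, graft_append h1.symm, ih1 h1.symm, ih2 h2.symm, forestLen]
    omega

theorem numNodes_shift (c : ℕ) (t : LTree) : (t.shift c).numNodes = t.numNodes := by
  induction t with
  | leaf x => rfl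
  | node i t1 t2 ih1 ih2 => simp [shift, numNodes, ih1, ih2]

end LTree

section Grafting

theorem graftForest_cons_append {t : LTree} {u : List LTree}
    (h : t.foliage.length = u.length) (X v : List LTree) :
    graftForest (t :: X) (u ++ v) = (t.graft u).1 :: graftForest X v := by
  simp [graftForest, LTree.graft_append h]

theorem exists_graftForest_cons {t : LTree} {X Z : List LTree}
    (h : (forestFoliage (t :: X)).length = Z.length) :
    ∃ u v, Z = u ++ v ∧ t.foliage.length = u.length ∧
      (forestFoliage X).length = v.length ∧
      graftForest (t :: X) Z = (t.graft u).1 :: graftForest X v := by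
  obtain ⟨u, v, rfl, hu, hv⟩ :=
    List.exists_append_of_length_eq_add (by simpa [forestFoliage_cons] using h.symm)
  exact ⟨u, v, rfl, hu.symm, hv.symm, graftForest_cons_append hu.symm X v⟩

theorem forestLen_graftForest {X Z : List LTree} (h : (forestFoliage X).length = Z.length) :
    forestLen (graftForest X Z) = forestLen X + forestLen Z := by
  induction X generalizing Z with
  | nil =>
    obtain rfl : Z = [] := List.length_eq_zero_iff.mp (by simpa [forestFoliage] using h.symm)
    rfl
  | cons t X ih =>
    obtain ⟨u, v, rfl, hu, hv, hg⟩ := exists_graftForest_cons h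
    rw [hg, forestLen_cons, forestLen_cons, LTree.numNodes_graft hu, ih hv, forestLen_append]
    omega

theorem graftForest_leavesOf_forestFoliage (X : List LTree) :
    graftForest X (leavesOf (forestFoliage X)) = X := by
  induction X with
  | nil => rfl
  | cons t X ih =>
    rw [forestFoliage_cons, leavesOf_append,
      graftForest_cons_append (length_leavesOf _).symm, ih, LTree.graft_leavesOf_foliage]

theorem forestLen_map_shift (c : ℕ) (Y : List LTree) :
    forestLen (Y.map (LTree.shift c)) = forestLen Y := by
  simp [forestLen, Function.comp_def, LTree.numNodes_shift]

theorem forestLen_bullet {X Y : List LTree} (h : (forestFoliage X).length = Y.length) :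
    forestLen (bullet X Y) = forestLen X + forestLen Y := by
  have hlen : (forestFoliage X).length = (Y.map (LTree.shift (forestLen X))).length := by
    simpa using h
  rw [bullet, forestLen_graftForest hlen, forestLen_map_shift]

theorem bullet_leavesOf_forestFoliage (X : List LTree) :
    bullet X (leavesOf (forestFoliage X)) = X := by
  rw [bullet, show (leavesOf (forestFoliage X)).map (LTree.shift (forestLen X)) =
    leavesOf (forestFoliage X) by simp [leavesOf, LTree.shift], graftForest_leavesOf_forestFoliage]

end Grafting

section Branching

theorem value_of_mem_branchActTree {a b m : ℕ} {t u : LTree} (h : u ∈ branchActTree a b m t) :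
    u.value = t.value := by
  induction t generalizing u with
  | leaf x =>
    by_cases hx : x = a + b <;> simp_all [branchActTree, LTree.value]
  | node i t1 t2 ih1 ih2 =>
    simp only [branchActTree, List.mem_append, List.mem_map] at h
    rcases h with ⟨w, hw, rfl⟩ | ⟨w, hw, rfl⟩ <;> simp [LTree.value, ih1, ih2, hw]

theorem squash_of_mem_branchWays {a b m : ℕ} {Y Y' : List LTree}
    (h : Y' ∈ branchWays a b m Y) : squash Y' = squash Y := by
  induction Y generalizing Y' with
  | nil => simp [branchWays] at h
  | cons t Y ih =>
    simp only [branchWays, List.mem_append, List.mem_map] at h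
    rcases h with ⟨u, hu, rfl⟩ | ⟨w, hw, rfl⟩
    · simp [squash, value_of_mem_branchActTree hu]
    · simpa [squash] using ih hw

theorem length_of_mem_branchWays {a b m : ℕ} {Y Y' : List LTree}
    (h : Y' ∈ branchWays a b m Y) : Y'.length = Y.length := by
  simpa [squash] using congrArg List.length (squash_of_mem_branchWays h)

theorem branchWays_append (a b m : ℕ) (X Y : List LTree) :
    branchWays a b m (X ++ Y) =
      (branchWays a b m X).map (· ++ Y) ++ (branchWays a b m Y).map (X ++ ·) := by
  induction X with
  | nil => simp [branchWays]
  | cons t X ih => simp [branchWays, ih, Function.comp_def]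

theorem branchActTree_graft (a b m : ℕ) {t : LTree} {zs : List LTree}
    (h : t.foliage.length = zs.length) :
    branchActTree a b m (t.graft zs).1 = (branchWays a b m zs).map fun w => (t.graft w).1 := by
  induction t generalizing zs with
  | leaf x =>
    obtain ⟨z, rfl⟩ := List.length_eq_one_iff.mp h.symm
    simp [LTree.graft, branchWays, Function.comp_def]
  | node i t1 t2 ih1 ih2 =>
    obtain ⟨u1, u2, rfl, h1, h2⟩ :=
      List.exists_append_of_length_eq_add (by simpa [LTree.foliage] using h.symm)
    simp only [LTree.graft, LTree.graft_append h1.symm, branchActTree, ih1 h1.symm,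
      ih2 h2.symm, branchWays_append, List.map_append, List.map_map]
    congr 1 <;> refine List.map_congr_left fun w hw => ?_
    · simp [LTree.graft_append (h1.symm.trans (length_of_mem_branchWays hw).symm)]
    · simp [LTree.graft_append h1.symm]

theorem branchWays_graftForest (a b m : ℕ) {X Z : List LTree}
    (h : (forestFoliage X).length = Z.length) :
    branchWays a b m (graftForest X Z) = (branchWays a b m Z).map (graftForest X) := by
  induction X generalizing Z with
  | nil =>
    obtain rfl : Z = [] := List.length_eq_zero_iff.mp (by simpa [forestFoliage] using h.symm)
    rfl
  | cons t X ih =>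
    obtain ⟨u, v, rfl, hu, hv, hg⟩ := exists_graftForest_cons h
    simp only [hg, branchWays, branchActTree_graft a b m hu, ih hv, branchWays_append,
      List.map_append, List.map_map]
    congr 1 <;> refine List.map_congr_left fun w hw => ?_
    · simp [graftForest_cons_append (hu.trans (length_of_mem_branchWays hw).symm)]
    · simp [graftForest_cons_append hu]

theorem branchActTree_shift (a b m c : ℕ) (t : LTree) :
    branchActTree a b (m + c) (t.shift c) = (branchActTree a b m t).map (LTree.shift c) := by
  induction t with
  | leaf x => by_cases hx : x = a + b <;> simp [LTree.shift, branchActTree, hx]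
  | node i t1 t2 ih1 ih2 => simp [LTree.shift, branchActTree, ih1, ih2, Function.comp_def]

theorem branchWays_map_shift (a b m c : ℕ) (Y : List LTree) :
    branchWays a b (m + c) (Y.map (LTree.shift c)) =
      (branchWays a b m Y).map (List.map (LTree.shift c)) := by
  induction Y with
  | nil => rfl
  | cons t Y ih => simp [branchWays, branchActTree_shift, ih, Function.comp_def]

theorem branchWays_bullet (a b : ℕ) {X Y : List LTree}
    (h : (forestFoliage X).length = Y.length) :
    branchWays a b (forestLen (bullet X Y) + 1) (bullet X Y) =
      (branchWays a b (forestLen Y + 1) Y).map (bullet X) := by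
  have hlen : (forestFoliage X).length = (Y.map (LTree.shift (forestLen X))).length := by
    simpa using h
  rw [forestLen_bullet h, bullet, branchWays_graftForest a b _ hlen,
    show forestLen X + forestLen Y + 1 = forestLen Y + 1 + forestLen X by omega,
    branchWays_map_shift, List.map_map]
  rfl

theorem mem_branchWays_leavesOf_iff {a b m : ℕ} {w : List ℕ} {Z : List LTree} :
    Z ∈ branchWays a b m (leavesOf w) ↔
      ∃ u v, w = u ++ (a + b) :: v ∧
        Z = leavesOf u ++ .node m (.leaf a) (.leaf b) :: leavesOf v := by
  constructor
  · intro h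
    induction w generalizing Z with
    | nil => simp [branchWays] at h
    | cons x w ih =>
      simp only [leavesOf_cons, branchWays, List.mem_append, List.mem_map] at h
      rcases h with ⟨t, ht, rfl⟩ | ⟨Z', hZ', rfl⟩
      · by_cases hx : x = a + b
        · simp only [branchActTree, hx, if_true, List.mem_singleton] at ht
          exact ⟨[], w, by simp [hx], by simp [ht]⟩
        · simp [branchActTree, hx] at ht
      · obtain ⟨u, v, rfl, rfl⟩ := ih hZ'
        exact ⟨x :: u, v, rfl, rfl⟩
  · rintro ⟨u, v, rfl, rfl⟩
    simp [branchWays_append, branchWays, branchActTree]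

theorem nodup_branchWays_leavesOf (a b m : ℕ) (w : List ℕ) :
    (branchWays a b m (leavesOf w)).Nodup := by
  induction w with
  | nil => simp [branchWays]
  | cons x w ih =>
    rw [leavesOf_cons, branchWays]
    refine List.Nodup.append ?_ (ih.map fun _ _ h => List.cons_injective h) ?_
    · by_cases hx : x = a + b <;> simp [branchActTree, hx]
    · by_cases hx : x = a + b <;> simp [branchActTree, hx, List.Disjoint]

theorem perm_cons_leavesOf_iff {t : LTree} {r : List ℕ} {Z : List LTree} :
    Z.Perm (t :: leavesOf r) ↔ ∃ u v, (u ++ v).Perm r ∧ Z = leavesOf u ++ t :: leavesOf v := by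
  constructor
  · intro h
    obtain ⟨Z₁, Z₂, rfl⟩ := List.append_of_mem (h.mem_iff.mpr List.mem_cons_self)
    have hrest : (Z₁ ++ Z₂).Perm (leavesOf r) := (List.perm_middle.symm.trans h).cons_inv
    have hleaf : ∀ t ∈ Z₁ ++ Z₂, ∃ x, t = .leaf x := fun t ht => by
      obtain ⟨x, -, rfl⟩ := List.mem_map.mp (hrest.subset ht)
      exact ⟨x, rfl⟩
    refine ⟨squash Z₁, squash Z₂, ?_, ?_⟩
    · have h' : (squash (Z₁ ++ Z₂)).Perm (squash (leavesOf r)) := hrest.map _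
      rwa [squash_leavesOf, squash, List.map_append] at h'
    · rw [leavesOf_squash fun t ht => hleaf t (List.mem_append_left _ ht),
        leavesOf_squash fun t ht => hleaf t (List.mem_append_right _ ht)]
  · rintro ⟨u, v, h, rfl⟩
    refine List.perm_middle.trans (List.Perm.cons t ?_)
    rw [← leavesOf_append]
    exact h.map _

theorem perm_append_cons_toList_iff {u v : List ℕ} {c : ℕ} {p : Multiset ℕ} :
    (u ++ c :: v).Perm p.toList ↔ c ∈ p ∧ (u ++ v).Perm (p.erase c).toList := by
  simp only [← Multiset.coe_eq_coe, Multiset.coe_toList, ← Multiset.cons_coe,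
    Multiset.coe_eq_coe.mpr List.perm_middle]
  constructor
  · rintro rfl
    simp
  · rintro ⟨hc, h⟩
    rw [h, Multiset.cons_erase hc]

theorem exists_perm_mem_branchWays_iff {a b : ℕ} {p : Multiset ℕ} {Z : List LTree} :
    (∃ w, w.Perm p.toList ∧ Z ∈ branchWays a b 1 (leavesOf w)) ↔
      a + b ∈ p ∧ Z.Perm (edgeForest a b p) := by
  simp only [mem_branchWays_leavesOf_iff, edgeForest, perm_cons_leavesOf_iff]
  constructor
  · rintro ⟨_, hw, u, v, rfl, rfl⟩
    obtain ⟨hc, huv⟩ := perm_append_cons_toList_iff.mp hw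
    exact ⟨hc, u, v, huv, rfl⟩
  · rintro ⟨hc, u, v, huv, rfl⟩
    exact ⟨_, perm_append_cons_toList_iff.mpr ⟨hc, huv⟩, u, v, rfl, rfl⟩

end Branching

noncomputable def actL1Lin (k : Type) [Semiring k] (s : ℕ × ℕ) :
    (List LTree →₀ k) →ₗ[k] (List LTree →₀ k) :=
  Finsupp.lift _ k _ fun X =>
    ((branchWays s.1 s.2 (forestLen X + 1) X).map fun Y => Finsupp.single Y 1).sum

noncomputable def mulLLin (k : Type) [CommSemiring k] :
    (List LTree →₀ k) →ₗ[k] (List LTree →₀ k) →ₗ[k] (List LTree →₀ k) :=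
  Finsupp.lift _ k _ fun X => Finsupp.lift _ k _ fun Y =>
    if forestFoliage X = squash Y then Finsupp.single (bullet X Y) 1 else 0

section Semiring

variable {k : Type} [Semiring k]

theorem actL1Lin_apply (s : ℕ × ℕ) (x : List LTree →₀ k) : actL1Lin k s x = actL1 k s x := rfl

theorem actL1_zero (s : ℕ × ℕ) : actL1 k s 0 = 0 :=
  (actL1Lin k s).map_zero

theorem actL1_single (s : ℕ × ℕ) (X : List LTree) (c : k) :
    actL1 k s (Finsupp.single X c) =
      c • ((branchWays s.1 s.2 (forestLen X + 1) X).map fun Y => Finsupp.single Y 1).sum :=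
  Finsupp.sum_single_index (zero_smul _ _)

theorem actLW_zero (B : List (ℕ × ℕ)) : actLW k B 0 = 0 := by
  induction B with
  | nil => rfl
  | cons s B ih => exact (congrArg (actLW k B) (actL1_zero s)).trans ih

theorem actQ1_single (s : ℕ × ℕ) (P : QPath) (c : k) :
    actQ1 k s (Finsupp.single P c) =
      if s.1 + s.2 ∈ P.source then Finsupp.single ⟨P.dest, P.steps ++ [s]⟩ c else 0 :=
  Finsupp.sum_single_index (by simp)

theorem actQW_zero (B : List (ℕ × ℕ)) : actQW k B 0 = 0 := by
  induction B with
  | nil => rfl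
  | cons s B ih => exact (congrArg (actQW k B) Finsupp.sum_zero_index).trans ih

theorem pol_leavesOf (l : List ℕ) :
    pol k (leavesOf l) = ∑ w ∈ l.permutations.toFinset, Finsupp.single (leavesOf w) 1 := by
  have hinj : Function.Injective leavesOf :=
    List.map_injective_iff.mpr fun _ _ h => LTree.leaf.inj h
  rw [pol, ← Finset.sum_image (f := fun W => Finsupp.single W (1 : k)) fun _ _ _ _ h => hinj h]
  congr 1
  ext W
  simp [leavesOf, ← List.map_permutations]

theorem actL1_pol_leavesOf (s : ℕ × ℕ) (p : Multiset ℕ) :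
    actL1 k s (pol k (leavesOf p.toList)) =
      if s.1 + s.2 ∈ p then pol k (edgeForest s.1 s.2 p) else 0 := by
  have hdisj : Set.PairwiseDisjoint (p.toList.permutations.toFinset : Set (List ℕ))
      fun w => (branchWays s.1 s.2 1 (leavesOf w)).toFinset := by
    refine fun w₁ _ w₂ _ hne => Finset.disjoint_left.mpr fun Z h₁ h₂ => hne ?_
    rw [← squash_leavesOf w₁, ← squash_leavesOf w₂,
      ← squash_of_mem_branchWays (List.mem_toFinset.mp h₁),
      ← squash_of_mem_branchWays (List.mem_toFinset.mp h₂)]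
  rw [pol_leavesOf, ← actL1Lin_apply, map_sum]
  simp_rw [actL1Lin_apply, actL1_single, one_smul, forestLen_leavesOf, zero_add,
    ← List.sum_toFinset _ (nodup_branchWays_leavesOf _ _ _ _)]
  rw [← Finset.sum_biUnion hdisj]
  split_ifs with hc
  · refine Finset.sum_congr (Finset.ext fun Z => ?_) fun _ _ => rfl
    simpa [hc] using exists_perm_mem_branchWays_iff (a := s.1) (b := s.2) (p := p) (Z := Z)
  · refine Finset.sum_eq_zero fun Z hZ => absurd ?_ hc
    simp only [Finset.mem_biUnion, List.mem_toFinset, List.mem_permutations] at hZ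
    exact (exists_perm_mem_branchWays_iff.mp hZ).1

end Semiring

section CommSemiring

variable {k : Type} [CommSemiring k]

theorem mulLLin_apply (f g : List LTree →₀ k) : mulLLin k f g = mulL k f g := by
  simp [mulLLin, mulL, Finsupp.lift_apply, Finsupp.smul_sum, smul_ite, Finsupp.smul_single]

theorem mulL_single_single (X Y : List LTree) (c d : k) :
    mulL k (Finsupp.single X c) (Finsupp.single Y d) =
      if forestFoliage X = squash Y then Finsupp.single (bullet X Y) (c * d) else 0 := by
  simp [mulL]

theorem actL1_mulL_single_single (s : ℕ × ℕ) (X Y : List LTree) :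
    actL1 k s (mulL k (Finsupp.single X 1) (Finsupp.single Y 1)) =
      mulL k (Finsupp.single X 1) (actL1 k s (Finsupp.single Y 1)) := by
  rw [mulL_single_single, actL1_single, one_smul, ← mulLLin_apply, map_list_sum, List.map_map]
  have hterm : ∀ Y' ∈ branchWays s.1 s.2 (forestLen Y + 1) Y,
      mulLLin k (Finsupp.single X 1) (Finsupp.single Y' 1) =
        if forestFoliage X = squash Y then Finsupp.single (bullet X Y') 1 else 0 := by
    intro Y' hY'
    rw [mulLLin_apply, mulL_single_single, squash_of_mem_branchWays hY', one_mul]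
  rw [List.map_congr_left (f := mulLLin k (Finsupp.single X 1) ∘ fun Y => Finsupp.single Y 1)
    hterm]
  by_cases h : forestFoliage X = squash Y
  · have hlen : (forestFoliage X).length = Y.length := by simp [h, squash]
    simp only [if_pos h, one_mul, actL1_single, one_smul, branchWays_bullet _ _ hlen,
      List.map_map, Function.comp_def]
  · simp [h, actL1_zero]

theorem actL1_mulL (s : ℕ × ℕ) (f g : List LTree →₀ k) :
    actL1 k s (mulL k f g) = mulL k f (actL1 k s g) := by
  suffices (mulLLin k).compr₂ (actL1Lin k s) = (mulLLin k).compl₂ (actL1Lin k s) by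
    simpa [mulLLin_apply, actL1Lin_apply] using LinearMap.congr_fun₂ this f g
  ext X Y : 4
  simpa [mulLLin_apply, actL1Lin_apply] using actL1_mulL_single_single (k := k) s X Y

theorem mulL_single_leavesOf (X : List LTree) (w : List ℕ) :
    mulL k (Finsupp.single X 1) (Finsupp.single (leavesOf w) 1) =
      if forestFoliage X = w then Finsupp.single X 1 else 0 := by
  rw [mulL_single_single, squash_leavesOf, one_mul]
  split_ifs with h
  · rw [← h, bullet_leavesOf_forestFoliage]
  · rfl

theorem mulL_pol_leavesOf {X : List LTree} {l : List ℕ} (h : (forestFoliage X).Perm l) :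
    mulL k (pol k X) (pol k (leavesOf l)) = pol k X := by
  rw [pol_leavesOf, ← mulLLin_apply, pol, map_sum (mulLLin k), LinearMap.sum_apply]
  refine Finset.sum_congr rfl fun X' hX' => ?_
  have hfol : forestFoliage X' ∈ l.permutations.toFinset := by
    have hperm : X'.Perm X := by simpa using hX'
    simpa [forestFoliage] using (hperm.flatMap_right LTree.foliage).trans h
  simp_rw [map_sum, mulLLin_apply, mulL_single_leavesOf, Finset.sum_ite_eq, if_pos hfol]

theorem forestFoliage_edgeForest_perm (a b : ℕ) (p : Multiset ℕ) :
    (forestFoliage (edgeForest a b p)).Perm (applyStep a b p).toList := by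
  rw [← Multiset.coe_eq_coe, Multiset.coe_toList, edgeForest, forestFoliage_cons,
    forestFoliage_leavesOf]
  simp [LTree.foliage, applyStep, ← Multiset.cons_coe]

theorem iotaSteps_singleton (s : ℕ × ℕ) (p : Multiset ℕ) :
    iotaSteps k p [s] = pol k (edgeForest s.1 s.2 p) :=
  mulL_pol_leavesOf (forestFoliage_edgeForest_perm s.1 s.2 p)

theorem sourceAfter_cons (p : Multiset ℕ) (e : ℕ × ℕ) (steps : List (ℕ × ℕ)) :
    sourceAfter p (e :: steps) = sourceAfter (applyStep e.1 e.2 p) steps := rfl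

theorem actL1_iotaSteps (s : ℕ × ℕ) (steps : List (ℕ × ℕ)) (p : Multiset ℕ) :
    actL1 k s (iotaSteps k p steps) =
      if s.1 + s.2 ∈ sourceAfter p steps then iotaSteps k p (steps ++ [s]) else 0 := by
  induction steps generalizing p with
  | nil => rw [List.nil_append, iotaSteps_singleton]; exact actL1_pol_leavesOf s p
  | cons e steps ih =>
    rw [iotaSteps, actL1_mulL, ih, sourceAfter_cons]
    split_ifs
    · rfl
    · rw [← mulLLin_apply, map_zero]

theorem actL1_iotaP (s : ℕ × ℕ) (P : QPath) :
    actL1 k s (iotaP k P) =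
      if s.1 + s.2 ∈ P.source then iotaP k ⟨P.dest, P.steps ++ [s]⟩ else 0 :=
  actL1_iotaSteps s P.steps P.dest

end CommSemiring

theorem iota_branch_equivariant_general (k : Type) [Field k] (P : QPath) (B : List (ℕ × ℕ)) :
    iotaLinM k (actQW k B (Finsupp.single P 1)) = actLW k B (iotaP k P) := by
  induction B generalizing P with
  | nil => simp [actQW, actLW, iotaLinM]
  | cons s B ih =>
    change iotaLinM k (actQW k B (actQ1 k s (Finsupp.single P 1))) =
      actLW k B (actL1 k s (iotaP k P))
    rw [actQ1_single, actL1_iotaP]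
    split_ifs
    · exact ih _
    · rw [actQW_zero, map_zero, actLW_zero]

/-- **`ι` is a homomorphism of `kℬ*`-modules (Proposition `IotaDHomomorphism`).**
For every path `P` of `Q` and every word `B ∈ ℬ*`, `ι(P.B) = ι(P).B`. -/
theorem iota_branch_equivariant (k : Type) [Field k] [CharZero k]
    (P : QPath) (hP : P.Valid) (B : List (ℕ × ℕ))
    (hB : ∀ s ∈ B, 0 < s.1 ∧ s.1 < s.2) :
    iotaLinM k (actQW k B (Finsupp.single P 1)) = actLW k B (iotaP k P) :=
  iota_branch_equivariant_general k P B
end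

section
/- The map E given by erasing node labels sends kℒ into kℳ, and the restriction E: kℒ → kℳ is a homomorphism of k-algebras. -/
set_option maxHeartbeats 1000000

/-! Erasing labels commutes with grafting, and it forgets the shift of labels in `X • Y`;
hence `E` is multiplicative on all of `kL`. On orbit sums, `E [X] = c • [E X]` where `c`
counts the rearrangements of `X` lying over `E X`: the number of rearrangements of `X` lying
over a rearrangement `Z` of `E X` does not depend on `Z`, because exchanging two adjacent
parts matches the rearrangements over `Z` with those over the exchanged `Z`. -/

@[simp]
lemma eraseT_value (t : LTree) : (eraseT t).value = t.value := by
  induction t <;> simp [eraseT, UTree.value, LTree.value, *]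

@[simp]
lemma eraseT_foliage (t : LTree) : (eraseT t).foliage = t.foliage := by
  induction t <;> simp [eraseT, UTree.foliage, LTree.foliage, *]

@[simp]
lemma eraseT_shift (m : ℕ) (t : LTree) : eraseT (t.shift m) = eraseT t := by
  induction t <;> simp [LTree.shift, eraseT, *]

lemma squashU_eraseF (Y : List LTree) : squashU (eraseF Y) = squash Y := by
  simp [squashU, squash, eraseF, Function.comp_def]

lemma foliageU_eraseF (X : List LTree) : foliageU (eraseF X) = forestFoliage X := by
  simp [foliageU, forestFoliage, eraseF, List.flatMap_map]

lemma eraseT_graft (t : LTree) (ys : List LTree) :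
    eraseT (t.graft ys).1 = ((eraseT t).graft (ys.map eraseT)).1 ∧
    (t.graft ys).2.map eraseT = ((eraseT t).graft (ys.map eraseT)).2 := by
  induction t generalizing ys with
  | leaf x => cases ys <;> exact ⟨rfl, rfl⟩
  | node i t1 t2 ih1 ih2 =>
    obtain ⟨h1, h1'⟩ := ih1 ys
    obtain ⟨h2, h2'⟩ := ih2 (t1.graft ys).2
    rw [h1'] at h2 h2'
    simp only [LTree.graft, UTree.graft, eraseT]
    exact ⟨by rw [h1, h2], h2'⟩

lemma eraseF_graftForest (X ys : List LTree) :
    eraseF (graftForest X ys) = graftForestU (eraseF X) (ys.map eraseT) := by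
  induction X generalizing ys with
  | nil => rfl
  | cons t ts ih =>
    obtain ⟨h1, h1'⟩ := eraseT_graft t ys
    simp only [graftForest, graftForestU, eraseF, List.map_cons] at ih ⊢
    rw [h1, ih, h1']

lemma eraseF_bullet (X Y : List LTree) :
    eraseF (bullet X Y) = bulletU (eraseF X) (eraseF Y) := by
  rw [bullet, bulletU, eraseF_graftForest, List.map_map]
  simp [eraseF, Function.comp_def]

section MatchProd

variable {α β γ k : Type*} [Semiring k] [DecidableEq γ]

/-- `mulL` and `mulM` are instances of this product. -/
noncomputable def matchProd (u v : α → γ) (op : α → α → α) (f g : α →₀ k) : α →₀ k :=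
  f.sum fun X a => g.sum fun Y b => if u X = v Y then Finsupp.single (op X Y) (a * b) else 0

lemma mapDomain_matchProd (e : α → β) {u v : α → γ} {u' v' : β → γ}
    {op : α → α → α} {op' : β → β → β} (hu : ∀ X, u' (e X) = u X) (hv : ∀ Y, v' (e Y) = v Y)
    (hop : ∀ X Y, op' (e X) (e Y) = e (op X Y)) (f g : α →₀ k) :
    Finsupp.mapDomain e (matchProd u v op f g)
      = matchProd u' v' op' (Finsupp.mapDomain e f) (Finsupp.mapDomain e g) := by
  unfold matchProd
  have inner_add (x : β) (a a' : k) (g' : β →₀ k) :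
      (g'.sum fun Y b => if u' x = v' Y then Finsupp.single (op' x Y) ((a + a') * b) else 0)
        = (g'.sum fun Y b => if u' x = v' Y then Finsupp.single (op' x Y) (a * b) else 0)
          + g'.sum fun Y b => if u' x = v' Y then Finsupp.single (op' x Y) (a' * b) else 0 := by
    rw [← Finsupp.sum_add]
    refine Finsupp.sum_congr fun Y _ => ?_
    split_ifs <;> simp only [add_mul, Finsupp.single_add, add_zero]
  rw [Finsupp.mapDomain_sum,
    Finsupp.sum_mapDomain_index (by simp) (fun x a a' => inner_add x a a' _)]
  refine Finsupp.sum_congr fun X _ => ?_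
  rw [Finsupp.mapDomain_sum, Finsupp.sum_mapDomain_index (by simp)
    (fun Y b b' => by split_ifs <;> simp only [mul_add, Finsupp.single_add, add_zero])]
  refine Finsupp.sum_congr fun Y _ => ?_
  rw [hu, hv, hop]
  split_ifs <;> simp only [Finsupp.mapDomain_single, Finsupp.mapDomain_zero]

end MatchProd

section PermFiber

open Finset

variable {α β : Type} [DecidableEq α] [DecidableEq β]

def permFiber (f : α → β) (l : List α) (Z : List β) : Finset (List α) :=
  {Y ∈ l.permutations.toFinset | Y.map f = Z}

lemma mem_permFiber {f : α → β} {l Y : List α} {Z : List β} :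
    Y ∈ permFiber f l Z ↔ Y.Perm l ∧ Y.map f = Z := by
  simp [permFiber]

lemma card_permFiber_cons (f : α → β) (l : List α) (b : β) (Z : List β) :
    #(permFiber f l (b :: Z)) = ∑ a ∈ l.toFinset with f a = b, #(permFiber f (l.erase a) Z) := by
  have hsplit : permFiber f l (b :: Z)
      = {a ∈ l.toFinset | f a = b}.biUnion fun a => (permFiber f (l.erase a) Z).image (a :: ·) := by
    ext Y
    simp only [mem_permFiber, Finset.mem_biUnion, Finset.mem_filter, List.mem_toFinset,
      Finset.mem_image]
    constructor
    · rintro ⟨hperm, hmap⟩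
      obtain _ | ⟨a, Y0⟩ := Y
      · simp at hmap
      obtain ⟨hfa, hY0⟩ := List.cons.inj hmap
      obtain ⟨ha, hperm0⟩ := List.cons_perm_iff_perm_erase.1 hperm
      exact ⟨a, ⟨ha, hfa⟩, Y0, ⟨hperm0, hY0⟩, rfl⟩
    · rintro ⟨a, ⟨ha, rfl⟩, Y0, ⟨hperm0, rfl⟩, rfl⟩
      exact ⟨List.cons_perm_iff_perm_erase.2 ⟨ha, hperm0⟩, rfl⟩
  rw [hsplit, Finset.card_biUnion]
  · exact Finset.sum_congr rfl fun a _ => Finset.card_image_of_injective _ List.cons_injective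
  · intro a _ a' _ hne
    simp only [Function.onFun, Finset.disjoint_left, Finset.mem_image]
    rintro _ ⟨Y, _, rfl⟩ ⟨Y', _, hY'⟩
    exact hne (List.cons.inj hY').1.symm

lemma card_permFiber_swap (f : α → β) (l : List α) (b c : β) (Z : List β) :
    #(permFiber f l (b :: c :: Z)) = #(permFiber f l (c :: b :: Z)) := by
  have maps_to {x y : β} : Set.MapsTo (swapAdj 0) (permFiber f l (x :: y :: Z) : Set (List α))
      (permFiber f l (y :: x :: Z) : Set (List α)) := by
    intro Y hY
    obtain ⟨hperm, hmap⟩ := mem_permFiber.1 hY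
    match Y, hmap with
    | a :: a' :: Y0, hmap =>
      simp only [List.map_cons, List.cons.injEq] at hmap
      exact mem_permFiber.2 ⟨(List.Perm.swap a a' Y0).trans hperm, by simp [swapAdj, hmap]⟩
  have swap_swap {x y : β} : Set.LeftInvOn (swapAdj 0) (swapAdj 0)
      (permFiber f l (x :: y :: Z) : Set (List α)) := by
    intro Y hY
    match Y, (mem_permFiber.1 hY).2 with
    | _ :: _ :: _, _ => rfl
  exact Finset.card_nbij' _ _ maps_to maps_to swap_swap swap_swap

lemma card_permFiber_of_perm (f : α → β) {Z Z' : List β} (h : Z.Perm Z') (l : List α) :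
    #(permFiber f l Z) = #(permFiber f l Z') := by
  induction h generalizing l with
  | nil => rfl
  | cons b _ ih => simp only [card_permFiber_cons, ih]
  | swap b c Z => exact card_permFiber_swap f l c b Z
  | trans _ _ ih₁ ih₂ => exact (ih₁ l).trans (ih₂ l)

lemma image_map_permutations (f : α → β) (l : List α) :
    l.permutations.toFinset.image (List.map f) = (l.map f).permutations.toFinset := by
  ext Z
  simp only [Finset.mem_image, List.mem_toFinset, List.mem_permutations]
  refine ⟨fun ⟨Y, hY, hYZ⟩ => hYZ ▸ hY.map f, fun hZ => ?_⟩
  have hself : l ∈ permFiber f l (l.map f) := mem_permFiber.2 ⟨List.Perm.refl l, rfl⟩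
  obtain ⟨Y, hY⟩ : (permFiber f l Z).Nonempty := by
    rw [← Finset.card_pos, card_permFiber_of_perm f hZ]
    exact Finset.card_pos.2 ⟨l, hself⟩
  exact ⟨Y, mem_permFiber.1 hY⟩

lemma mapDomain_sum_permutations {k : Type*} [Semiring k] (f : α → β) (l : List α) :
    Finsupp.mapDomain (List.map f) (∑ Y ∈ l.permutations.toFinset, Finsupp.single Y (1 : k))
      = #(permFiber f l (l.map f)) • ∑ Z ∈ (l.map f).permutations.toFinset, Finsupp.single Z 1 := by
  simp only [Finsupp.mapDomain_finsetSum, Finsupp.mapDomain_single]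
  rw [Finset.sum_comp (fun Z => Finsupp.single Z (1 : k)), image_map_permutations, Finset.smul_sum]
  refine Finset.sum_congr rfl fun Z hZ => ?_
  rw [← card_permFiber_of_perm f (List.mem_permutations.1 (List.mem_toFinset.1 hZ)) l]
  rfl

end PermFiber

lemma IsLForest.isUForest_eraseF {X : List LTree} (hX : IsLForest X) : IsUForest (eraseF X) := by
  rw [IsUForest, foliageU_eraseF]
  exact hX.2.2

lemma EL_pol (k : Type) [Semiring k] (X : List LTree) :
    EL k (pol k X) = (permFiber eraseT X (eraseF X)).card • polU k (eraseF X) :=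
  mapDomain_sum_permutations eraseT X

lemma EL_mulL (k : Type) [Semiring k] (f g : List LTree →₀ k) :
    EL k (mulL k f g) = mulM k (EL k f) (EL k g) :=
  mapDomain_matchProd eraseF foliageU_eraseF squashU_eraseF
    (fun X Y => (eraseF_bullet X Y).symm) f g

theorem erase_labels_algebra_hom_general (k : Type) [Field k] :
    (∀ x ∈ LspanAll k, EL k x ∈ MspanAll k) ∧
    (∀ x ∈ LspanAll k, ∀ y ∈ LspanAll k,
      EL k (mulL k x y) = mulM k (EL k x) (EL k y)) := by
  have span_le : LspanAll k ≤ (MspanAll k).comap (EL k) := by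
    refine Submodule.span_le.2 ?_
    rintro _ ⟨X, hX, rfl⟩
    rw [SetLike.mem_coe, Submodule.mem_comap, EL_pol, MspanAll]
    refine nsmul_mem ?_ _
    exact Submodule.subset_span ⟨_, hX.isUForest_eraseF, rfl⟩
  exact ⟨fun x hx => span_le hx, fun x _ y _ => EL_mulL k x y⟩

/-- **`E : kℒ → kℳ` is an algebra homomorphism.** Erasing node labels sends `kℒ`
into `kℳ` and respects the products. -/
theorem erase_labels_algebra_hom (k : Type) [Field k] [CharZero k] :
    (∀ x ∈ LspanAll k, EL k x ∈ MspanAll k) ∧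
    (∀ x ∈ LspanAll k, ∀ y ∈ LspanAll k,
      EL k (mulL k x y) = mulM k (EL k x) (EL k y)) :=
  erase_labels_algebra_hom_general k
end
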